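/- arXiv:2210.01050 — 7 statements merged into one kernel-verified Lean document; each statement's English description precedes it below -/
import Mathlib

section
/- Let A be a finite set and let π, π' be probability distributions on A defined by π(a) ∝ exp(θ(a)) and π'(a) ∝ exp(θ'(a)) for vectors θ, θ' ∈ ℝ^A. Then the ℓ1 distance satisfies ‖π - π'‖₁ ≤ ‖θ - θ'‖∞. -/
lemma key_exp_aux (M : ℝ) (hM : 0 ≤ M) : 2 * (Real.exp M - 1) ≤ M * (Real.exp M + 1) := by
  have hd : ∀ t : ℝ, HasDerivAt (fun t : ℝ => t * Real.exp t + t + 2 - 2 * Real.exp t)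
      ((t - 1) * Real.exp t + 1) t := by
    intro t
    have h1 : HasDerivAt (fun t : ℝ => t * Real.exp t) (1 * Real.exp t + t * Real.exp t) t :=
      (hasDerivAt_id t).mul (Real.hasDerivAt_exp t)
    have h2 : HasDerivAt (fun t : ℝ => t * Real.exp t + t + 2)
        (1 * Real.exp t + t * Real.exp t + 1) t :=
      (h1.add (hasDerivAt_id t)).add_const 2
    have h3 : HasDerivAt (fun t : ℝ => t * Real.exp t + t + 2 - 2 * Real.exp t) _ t :=
      h2.sub ((Real.hasDerivAt_exp t).const_mul 2)
    convert h3 using 1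
    ring
  have hpos : ∀ t : ℝ, 0 ≤ (t - 1) * Real.exp t + 1 := by
    intro t
    have h1 : -t + 1 ≤ Real.exp (-t) := Real.add_one_le_exp _
    have h2 := mul_le_mul_of_nonneg_right h1 (Real.exp_pos t).le
    rw [← Real.exp_add] at h2
    simp only [neg_add_cancel, Real.exp_zero] at h2
    nlinarith
  have hmono : Monotone (fun t : ℝ => t * Real.exp t + t + 2 - 2 * Real.exp t) :=
    monotone_of_deriv_nonneg (fun t => (hd t).differentiableAt)
      (fun t => by rw [(hd t).deriv]; exact hpos t)
  have h := hmono hM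
  simp only [Real.exp_zero] at h
  nlinarith [h]

set_option maxHeartbeats 1000000 in
theorem stmt_3 {A : Type*} [Fintype A] [Nonempty A] (θ θ' : A → ℝ) (π π' : A → ℝ)
    (hπ : ∀ a, π a = Real.exp (θ a) / ∑ a', Real.exp (θ a'))
    (hπ' : ∀ a, π' a = Real.exp (θ' a) / ∑ a', Real.exp (θ' a')) :
    ∑ a, |π a - π' a| ≤
      Finset.univ.sup' Finset.univ_nonempty (fun a => |θ a - θ' a|) := by
  set M := Finset.univ.sup' Finset.univ_nonempty (fun a => |θ a - θ' a|) with hMdef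
  have hMle : ∀ a, |θ a - θ' a| ≤ M := fun a => by
    rw [hMdef]; exact Finset.le_sup' (fun a => |θ a - θ' a|) (Finset.mem_univ a)
  obtain ⟨a₀⟩ := ‹Nonempty A›
  have hM0 : 0 ≤ M := le_trans (abs_nonneg _) (hMle a₀)
  have hZ : 0 < ∑ a', Real.exp (θ a') :=
    Finset.sum_pos (fun a _ => Real.exp_pos _) ⟨a₀, Finset.mem_univ _⟩
  have hZ' : 0 < ∑ a', Real.exp (θ' a') :=
    Finset.sum_pos (fun a _ => Real.exp_pos _) ⟨a₀, Finset.mem_univ _⟩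
  have hsum : ∑ a, π a = 1 := by
    rw [Finset.sum_congr rfl fun a _ => hπ a, ← Finset.sum_div, div_self hZ.ne']
  have hsum' : ∑ a, π' a = 1 := by
    rw [Finset.sum_congr rfl fun a _ => hπ' a, ← Finset.sum_div, div_self hZ'.ne']
  set S := Finset.univ.filter (fun a => 0 ≤ π a - π' a) with hSdef
  have h0 : ∑ a, (π a - π' a) = 0 := by
    rw [Finset.sum_sub_distrib, hsum, hsum']; ring
  have hmax : ∑ a ∈ S, (π a - π' a) = ∑ a, max (π a - π' a) 0 := by
    rw [hSdef, Finset.sum_filter]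
    refine Finset.sum_congr rfl fun a _ => ?_
    rcases le_or_gt 0 (π a - π' a) with h | h
    · rw [if_pos h, max_eq_left h]
    · rw [if_neg (not_le.2 h), max_eq_right h.le]
  have hsplit : ∑ a, |π a - π' a| = 2 * ∑ a ∈ S, (π a - π' a) := by
    have habs : ∀ a, |π a - π' a| = 2 * max (π a - π' a) 0 - (π a - π' a) := by
      intro a
      rcases le_or_gt 0 (π a - π' a) with h | h
      · rw [abs_of_nonneg h, max_eq_left h]; ring
      · rw [abs_of_neg h, max_eq_right h.le]; ring
    rw [Finset.sum_congr rfl fun a _ => habs a, Finset.sum_sub_distrib, h0, hmax,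
      ← Finset.mul_sum]
    ring
  rw [hsplit]
  rcases Finset.eq_empty_or_nonempty S with hSe | hSne
  · rw [hSe]
    simpa using hM0
  set T := Finset.univ.filter (fun a => ¬ 0 ≤ π a - π' a) with hTdef
  set X := ∑ a ∈ S, Real.exp (θ a) with hXdef
  set x := ∑ a ∈ S, Real.exp (θ' a) with hxdef
  set Y := ∑ a ∈ T, Real.exp (θ a) with hYdef
  set y := ∑ a ∈ T, Real.exp (θ' a) with hydef
  have hX : 0 < X := Finset.sum_pos (fun a _ => Real.exp_pos _) hSne
  have hx : 0 < x := Finset.sum_pos (fun a _ => Real.exp_pos _) hSne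
  have hY0 : 0 ≤ Y := Finset.sum_nonneg fun a _ => (Real.exp_pos _).le
  have hy0 : 0 ≤ y := Finset.sum_nonneg fun a _ => (Real.exp_pos _).le
  have hZXY : ∑ a', Real.exp (θ a') = X + Y :=
    (Finset.sum_filter_add_sum_filter_not _ _ _).symm
  have hZ'xy : ∑ a', Real.exp (θ' a') = x + y :=
    (Finset.sum_filter_add_sum_filter_not _ _ _).symm
  set s := Real.exp (-M) with hsdef
  have hs0 : 0 < s := Real.exp_pos _
  have hs1 : s ≤ 1 := Real.exp_le_one_iff.mpr (by linarith)
  have hEs : Real.exp M * s = 1 := by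
    rw [hsdef, ← Real.exp_add, add_neg_cancel, Real.exp_zero]
  have hXx : X ≤ Real.exp M * x := by
    rw [hxdef, Finset.mul_sum]
    refine Finset.sum_le_sum fun a _ => ?_
    rw [← Real.exp_add]
    have := (abs_le.mp (hMle a)).2
    exact Real.exp_le_exp.mpr (by linarith)
  have hYy : s * y ≤ Y := by
    rw [hydef, Finset.mul_sum]
    refine Finset.sum_le_sum fun a _ => ?_
    rw [← Real.exp_add]
    have := (abs_le.mp (hMle a)).1
    exact Real.exp_le_exp.mpr (by linarith)
  have hsy0 : 0 ≤ s * y := mul_nonneg hs0.le hy0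
  have hd1 : 0 < X + s * y := by linarith
  have hd2 : 0 < Real.exp M * x + s * y := by nlinarith [Real.exp_pos M]
  have hd3 : 0 < x + s ^ 2 * y := by nlinarith
  have hd4 : 0 < x + y := by linarith
  have hd5 : 0 < X + Y := by linarith
  have hπS : ∑ a ∈ S, (π a - π' a) = X / (X + Y) - x / (x + y) := by
    rw [Finset.sum_sub_distrib]
    congr 1
    · rw [Finset.sum_congr rfl fun a _ => hπ a, ← Finset.sum_div, hZXY]
    · rw [Finset.sum_congr rfl fun a _ => hπ' a, ← Finset.sum_div, hZ'xy]
  rw [hπS]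
  have h1 : X / (X + Y) ≤ X / (X + s * y) := by
    rw [div_le_div_iff₀ hd5 hd1]
    nlinarith
  have h2 : X / (X + s * y) ≤ (Real.exp M * x) / (Real.exp M * x + s * y) := by
    rw [div_le_div_iff₀ hd1 hd2]
    nlinarith
  have h3 : (Real.exp M * x) / (Real.exp M * x + s * y) = x / (x + s ^ 2 * y) := by
    rw [div_eq_div_iff hd2.ne' hd3.ne']
    linear_combination x * y * s * hEs
  have h4 : x / (x + s ^ 2 * y) - x / (x + y) ≤ (1 - s) / (1 + s) := by
    rw [div_sub_div _ _ hd3.ne' hd4.ne', div_le_div_iff₀ (mul_pos hd3 hd4) (by linarith : (0:ℝ) < 1 + s)]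
    nlinarith [mul_nonneg (sub_nonneg.2 hs1) (sq_nonneg (x - s * y))]
  have h5 : (1 - s) / (1 + s) ≤ M / 2 := by
    rw [div_le_div_iff₀ (by positivity) two_pos]
    nlinarith [mul_le_mul_of_nonneg_left (key_exp_aux M hM0) hs0.le]
  linarith [h3 ▸ h2.trans_eq h3 |>.trans (le_refl _)]
end

section
/- Let w ∈ ℝ^A with ‖w‖∞ ≤ 1/30, let π be a probability distribution on a finite set A with π(a) > 0 for all a, and define π'(a) = π(a)exp(w(a))/Σ_{a'}π(a')exp(w(a')). Then KL(π ‖ π') ≤ 2·KL(π' ‖ π). -/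
open Finset

lemma key_pointwise {x : ℝ} (hx : |x| ≤ 1/15) :
    0 ≤ x * (1 + 2 * Real.exp x) - 3 * (Real.exp x - 1) := by
  have h1 : x + 1 ≤ Real.exp x := Real.add_one_le_exp x
  have hx1 : |x| ≤ 1 := hx.trans (by norm_num)
  have h2 := Real.exp_bound hx1 (n := 3) (by norm_num)
  have h3 : Real.exp x ≤ (1 + x + x^2/2) + |x|^3 * (4/18) := by
    have : (∑ m ∈ range 3, x ^ m / m.factorial) = 1 + x + x^2/2 := by
      norm_num [Finset.sum_range_succ]
    rw [this] at h2
    have h2' := (abs_sub_le_iff.1 h2).1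
    norm_num [Nat.factorial] at h2' ⊢
    linarith
  rcases abs_le.1 hx with ⟨hl, hr⟩
  rcases le_or_gt 0 x with hs | hs
  · rw [abs_of_nonneg hs] at h3
    nlinarith [sq_nonneg x, pow_le_pow_left₀ hs hr 3, sq_nonneg (x^2)]
  · rw [abs_of_neg hs] at h3
    nlinarith [sq_nonneg x, sq_nonneg (x^2), mul_pos (mul_pos (neg_pos.2 hs) (neg_pos.2 hs)) (neg_pos.2 hs)]

theorem stmt_5 {A : Type*} [Fintype A] (w : A → ℝ) (hw : ∀ a, |w a| ≤ 1/30)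
    (π π' : A → ℝ) (hpos : ∀ a, 0 < π a) (hsum : ∑ a, π a = 1)
    (hπ' : ∀ a, π' a = π a * Real.exp (w a) / ∑ a', π a' * Real.exp (w a')) :
    ∑ a, π a * (Real.log (π a) - Real.log (π' a)) ≤
      2 * ∑ a, π' a * (Real.log (π' a) - Real.log (π a)) := by
  set Z : ℝ := ∑ a', π a' * Real.exp (w a') with hZ
  have hne : Nonempty A := by
    rcases isEmpty_or_nonempty A with h | h
    · simp [Finset.univ_eq_empty] at hsum
    · exact h
  have hZpos : 0 < Z := Finset.sum_pos (fun a _ => mul_pos (hpos a) (Real.exp_pos _))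
    Finset.univ_nonempty
  have hZub : Z ≤ Real.exp (1/30) := by
    calc Z ≤ ∑ a, π a * Real.exp (1/30) := by
            apply Finset.sum_le_sum
            intro a _
            exact mul_le_mul_of_nonneg_left (Real.exp_le_exp.2 (abs_le.1 (hw a)).2) (hpos a).le
      _ = Real.exp (1/30) := by rw [← Finset.sum_mul, hsum, one_mul]
  have hZlb : Real.exp (-(1/30)) ≤ Z := by
    calc Real.exp (-(1/30)) = ∑ a, π a * Real.exp (-(1/30)) := by
            rw [← Finset.sum_mul, hsum, one_mul]
      _ ≤ Z := by
            apply Finset.sum_le_sum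
            intro a _
            exact mul_le_mul_of_nonneg_left (Real.exp_le_exp.2 (abs_le.1 (hw a)).1) (hpos a).le
  have hlogZ : |Real.log Z| ≤ 1/30 := by
    rw [abs_le]
    constructor
    · rw [← Real.log_exp (-(1/30))]
      exact Real.log_le_log (Real.exp_pos _) hZlb
    · rw [← Real.log_exp (1/30)]
      exact Real.log_le_log hZpos hZub
  set u : A → ℝ := fun a => w a - Real.log Z with hu
  have hupi' : ∀ a, π' a = π a * Real.exp (u a) := by
    intro a
    rw [hπ' a, hu]
    simp only []
    rw [Real.exp_sub, Real.exp_log hZpos]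
    field_simp
  have husum : ∑ a, π a * Real.exp (u a) = 1 := by
    have : ∀ a, π a * Real.exp (u a) = π a * Real.exp (w a) / Z := by
      intro a; rw [hu]; simp only []; rw [Real.exp_sub, Real.exp_log hZpos]; ring
    simp only [this, ← Finset.sum_div, ← hZ]
    field_simp
  have hub : ∀ a, |u a| ≤ 1/15 := by
    intro a
    calc |u a| ≤ |w a| + |Real.log Z| := abs_sub _ _
      _ ≤ 1/30 + 1/30 := add_le_add (hw a) hlogZ
      _ = 1/15 := by norm_num
  have hlog : ∀ a, Real.log (π' a) - Real.log (π a) = u a := by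
    intro a
    rw [hupi' a, Real.log_mul (hpos a).ne' (Real.exp_pos _).ne', Real.log_exp]
    ring
  have hL : ∑ a, π a * (Real.log (π a) - Real.log (π' a)) = -∑ a, π a * u a := by
    rw [← Finset.sum_neg_distrib]
    apply Finset.sum_congr rfl
    intro a _
    linear_combination (-(π a)) * (hlog a)
  have hR : ∑ a, π' a * (Real.log (π' a) - Real.log (π a))
      = ∑ a, π a * Real.exp (u a) * u a := by
    apply Finset.sum_congr rfl
    intro a _
    rw [hlog a, hupi' a]
  rw [hL, hR]
  have hzero : ∑ a, π a * (Real.exp (u a) - 1) = 0 := by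
    simp only [mul_sub, Finset.sum_sub_distrib, husum, mul_one, hsum, sub_self]
  have hkey : 0 ≤ ∑ a, π a * (u a * (1 + 2 * Real.exp (u a)) - 3 * (Real.exp (u a) - 1)) :=
    Finset.sum_nonneg fun a _ => mul_nonneg (hpos a).le (key_pointwise (hub a))
  have hexpand : ∑ a, π a * (u a * (1 + 2 * Real.exp (u a)) - 3 * (Real.exp (u a) - 1))
      = (∑ a, π a * u a) + 2 * (∑ a, π a * Real.exp (u a) * u a)
        - 3 * ∑ a, π a * (Real.exp (u a) - 1) := by
    rw [Finset.mul_sum, Finset.mul_sum, ← Finset.sum_add_distrib, ← Finset.sum_sub_distrib]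
    apply Finset.sum_congr rfl
    intro a _
    ring
  rw [hexpand, hzero] at hkey
  linarith
end

section
/- Let w ∈ ℝ^A with ‖w‖∞ ≤ 1/30, let π be a strictly positive probability distribution on a finite set A, and define π'(a) ∝ π(a)exp(w(a)). Then for every a ∈ A, |π(a)/π'(a) - 1| ≤ 3‖w‖∞. -/
theorem stmt_6 {A : Type*} [Fintype A] [Nonempty A] (w : A → ℝ)
    (hw : Finset.univ.sup' Finset.univ_nonempty (fun a => |w a|) ≤ 1/30)
    (π π' : A → ℝ) (hpos : ∀ a, 0 < π a) (hsum : ∑ a, π a = 1)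
    (hπ' : ∀ a, π' a = π a * Real.exp (w a) / ∑ a', π a' * Real.exp (w a')) :
    ∀ a, |π a / π' a - 1| ≤
      3 * Finset.univ.sup' Finset.univ_nonempty (fun a => |w a|) := by
  intro a
  set M := Finset.univ.sup' Finset.univ_nonempty (fun a => |w a|) with hM
  have hwM : ∀ b, |w b| ≤ M := fun b =>
    Finset.le_sup' (fun a => |w a|) (Finset.mem_univ b)
  have hM0 : 0 ≤ M := le_trans (abs_nonneg _) (hwM a)
  set S := ∑ a', π a' * Real.exp (w a') with hS
  have hSle : S ≤ Real.exp M := by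
    calc S ≤ ∑ a', π a' * Real.exp M := by
            apply Finset.sum_le_sum
            intro b _
            exact mul_le_mul_of_nonneg_left
              (Real.exp_le_exp.2 (le_trans (le_abs_self _) (hwM b))) (hpos b).le
      _ = Real.exp M := by rw [← Finset.sum_mul, hsum, one_mul]
  have hSge : Real.exp (-M) ≤ S := by
    calc Real.exp (-M) = ∑ a', π a' * Real.exp (-M) := by
            rw [← Finset.sum_mul, hsum, one_mul]
      _ ≤ S := by
            apply Finset.sum_le_sum
            intro b _
            exact mul_le_mul_of_nonneg_left
              (Real.exp_le_exp.2 (neg_le_of_abs_le (hwM b))) (hpos b).le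
  have hSpos : 0 < S := lt_of_lt_of_le (Real.exp_pos _) hSge
  have hratio : π a / π' a = S * Real.exp (-w a) := by
    rw [hπ' a]
    rw [Real.exp_neg]
    field_simp
    exact div_self (hpos a).ne'
  have hup : S * Real.exp (-w a) ≤ Real.exp (2 * M) := by
    calc S * Real.exp (-w a) ≤ Real.exp M * Real.exp M := by
          apply mul_le_mul hSle _ (Real.exp_pos _).le (Real.exp_pos _).le
          exact Real.exp_le_exp.2 (by linarith [neg_abs_le (w a), hwM a])
      _ = Real.exp (2 * M) := by rw [← Real.exp_add]; ring_nf
  have hlo : Real.exp (-(2 * M)) ≤ S * Real.exp (-w a) := by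
    calc Real.exp (-(2 * M)) = Real.exp (-M) * Real.exp (-M) := by
          rw [← Real.exp_add]; ring_nf
      _ ≤ S * Real.exp (-w a) := by
          apply mul_le_mul hSge _ (Real.exp_pos _).le hSpos.le
          exact Real.exp_le_exp.2 (by linarith [le_abs_self (w a), hwM a])
  -- key: exp(2M) - 1 ≤ 3M and 1 - exp(-2M) ≤ 3M
  have hM2 : 2 * M ≤ 1/15 := by linarith
  have hexp_ub : Real.exp (2 * M) ≤ 1 / (1 - 2 * M) := by
    have h1 : 1 - 2 * M ≤ Real.exp (-(2 * M)) := by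
      have := Real.add_one_le_exp (-(2 * M)); linarith
    have h2 : Real.exp (-(2 * M)) = (Real.exp (2 * M))⁻¹ := Real.exp_neg _
    rw [le_div_iff₀ (by linarith)]
    have hp := Real.exp_pos (2 * M)
    rw [h2] at h1
    calc Real.exp (2 * M) * (1 - 2 * M) ≤ Real.exp (2 * M) * (Real.exp (2 * M))⁻¹ :=
          mul_le_mul_of_nonneg_left h1 hp.le
      _ = 1 := mul_inv_cancel₀ hp.ne'
  have key : Real.exp (2 * M) - 1 ≤ 3 * M := by
    have hden : (0:ℝ) < 1 - 2 * M := by linarith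
    have h3 : 1 / (1 - 2 * M) ≤ 1 + 3 * M := by
      rw [div_le_iff₀ hden]; nlinarith
    linarith
  have key2 : 1 - Real.exp (-(2 * M)) ≤ 3 * M := by
    have h1 := Real.add_one_le_exp (-(2 * M))
    linarith
  rw [hratio, abs_le]
  constructor
  · linarith
  · linarith
end

section
/- Regularized three-point lemma: Let A be a finite set, η > 0, τ ≥ 0 with ητ < 1, and let y be a strictly positive probability distribution on A, w ∈ ℝ^A. Define x(a) = y(a)^{1-ητ}·exp(-η w(a)) / Σ_{a'} y(a')^{1-ητ}·exp(-η w(a')). Then for every probability distribution z on A: (η/(1-ητ))·[⟨x - z, w⟩ - τH(x) + τH(z)] = KL(z‖y) - (1/(1-ητ))·KL(z‖x) - KL(x‖y), where H(p) = -Σ_a p(a)log p(a) is the Shannon entropy. -/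
theorem stmt_8 {A : Type*} [Fintype A] (η τ : ℝ) (hη : 0 < η) (hτ : 0 ≤ τ)
    (hητ : η * τ < 1)
    (y : A → ℝ) (hy : ∀ a, 0 < y a) (hys : ∑ a, y a = 1)
    (w : A → ℝ) (x : A → ℝ)
    (hx : ∀ a, x a = y a ^ (1 - η * τ) * Real.exp (-η * w a) /
      ∑ a', y a' ^ (1 - η * τ) * Real.exp (-η * w a'))
    (z : A → ℝ) (hz : ∀ a, 0 < z a) (hzs : ∑ a, z a = 1) :
    (η / (1 - η * τ)) *
        ((∑ a, (x a - z a) * w a)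
          - τ * (-(∑ a, x a * Real.log (x a)))
          + τ * (-(∑ a, z a * Real.log (z a)))) =
      (∑ a, z a * (Real.log (z a) - Real.log (y a)))
        - (1 / (1 - η * τ)) * (∑ a, z a * (Real.log (z a) - Real.log (x a)))
        - (∑ a, x a * (Real.log (x a) - Real.log (y a))) := by
  have hβ : (0:ℝ) < 1 - η * τ := by linarith
  set S : ℝ := ∑ a', y a' ^ (1 - η * τ) * Real.exp (-η * w a') with hS
  have htpos : ∀ a, 0 < y a ^ (1 - η * τ) * Real.exp (-η * w a) := fun a =>
    mul_pos (Real.rpow_pos_of_pos (hy a) _) (Real.exp_pos _)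
  have hne : (Finset.univ : Finset A).Nonempty := by
    rcases (Finset.univ (α := A)).eq_empty_or_nonempty with h | h
    · rw [h] at hzs; simp at hzs
    · exact h
  have hSpos : 0 < S := Finset.sum_pos (fun a _ => htpos a) hne
  have hxs : ∑ a, x a = 1 := by
    simp only [hx]
    rw [← Finset.sum_div, div_self hSpos.ne']
  have key : ∀ a, Real.log (x a) =
      (1 - η * τ) * Real.log (y a) - η * w a - Real.log S := by
    intro a
    rw [hx a, Real.log_div (mul_pos (Real.rpow_pos_of_pos (hy a) _)
        (Real.exp_pos _)).ne' hSpos.ne',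
      Real.log_mul (Real.rpow_pos_of_pos (hy a) _).ne' (Real.exp_ne_zero _),
      Real.log_rpow (hy a), Real.log_exp]
    ring
  have hB : ∑ a, x a * Real.log (x a) =
      (1 - η * τ) * (∑ a, x a * Real.log (y a)) - η * (∑ a, x a * w a)
        - Real.log S := by
    simp only [key]
    have : ∀ a, x a * ((1 - η * τ) * Real.log (y a) - η * w a - Real.log S) =
        (1 - η * τ) * (x a * Real.log (y a)) - η * (x a * w a)
          - Real.log S * x a := fun a => by ring
    simp only [this, Finset.sum_sub_distrib, ← Finset.mul_sum, hxs, mul_one]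
  have hDz : ∑ a, z a * Real.log (x a) =
      (1 - η * τ) * (∑ a, z a * Real.log (y a)) - η * (∑ a, z a * w a)
        - Real.log S := by
    simp only [key]
    have : ∀ a, z a * ((1 - η * τ) * Real.log (y a) - η * w a - Real.log S) =
        (1 - η * τ) * (z a * Real.log (y a)) - η * (z a * w a)
          - Real.log S * z a := fun a => by ring
    simp only [this, Finset.sum_sub_distrib, ← Finset.mul_sum, hzs, mul_one]
  have hA : ∑ a, (x a - z a) * w a = (∑ a, x a * w a) - ∑ a, z a * w a := by
    simp [sub_mul, Finset.sum_sub_distrib]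
  have hC : ∑ a, z a * (Real.log (z a) - Real.log (y a)) =
      (∑ a, z a * Real.log (z a)) - ∑ a, z a * Real.log (y a) := by
    simp [mul_sub, Finset.sum_sub_distrib]
  have hD : ∑ a, z a * (Real.log (z a) - Real.log (x a)) =
      (∑ a, z a * Real.log (z a)) - ∑ a, z a * Real.log (x a) := by
    simp [mul_sub, Finset.sum_sub_distrib]
  have hE : ∑ a, x a * (Real.log (x a) - Real.log (y a)) =
      (∑ a, x a * Real.log (x a)) - ∑ a, x a * Real.log (y a) := by
    simp [mul_sub, Finset.sum_sub_distrib]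
  rw [hA, hC, hD, hE, hDz, hB]
  field_simp
  ring
end

section
/- As a corollary of the regularized three-point lemma with z = y: under the same setup, (η/(1-ητ))·[⟨x - y, w⟩ - τH(x) + τH(y)] = -(1/(1-ητ))·KL(y‖x) - KL(x‖y). In particular the left side is nonpositive. -/
open Finset

lemma kl_nonneg' {A : Type*} [Fintype A] (p q : A → ℝ) (hp : ∀ a, 0 < p a)
    (hq : ∀ a, 0 < q a) (hps : ∑ a, p a = 1) (hqs : ∑ a, q a = 1) :
    0 ≤ ∑ a, p a * (Real.log (p a) - Real.log (q a)) := by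
  have h : ∀ a ∈ Finset.univ, p a - q a ≤ p a * (Real.log (p a) - Real.log (q a)) := by
    intro a _
    have hlog : Real.log (q a / p a) ≤ q a / p a - 1 :=
      Real.log_le_sub_one_of_pos (div_pos (hq a) (hp a))
    have := mul_le_mul_of_nonneg_left hlog (le_of_lt (hp a))
    rw [Real.log_div (ne_of_gt (hq a)) (ne_of_gt (hp a))] at this
    have hne : p a ≠ 0 := ne_of_gt (hp a)
    have h2 : p a * (q a / p a - 1) = q a - p a := by field_simp
    nlinarith [this]
  have := Finset.sum_le_sum h
  rw [Finset.sum_sub_distrib, hps, hqs] at this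
  linarith

theorem stmt_9 {A : Type*} [Fintype A] (η τ : ℝ) (hη : 0 < η) (hτ : 0 ≤ τ)
    (hητ : η * τ < 1)
    (y : A → ℝ) (hy : ∀ a, 0 < y a) (hys : ∑ a, y a = 1)
    (w : A → ℝ) (x : A → ℝ)
    (hx : ∀ a, x a = y a ^ (1 - η * τ) * Real.exp (-η * w a) /
      ∑ a', y a' ^ (1 - η * τ) * Real.exp (-η * w a')) :
    ((η / (1 - η * τ)) *
        ((∑ a, (x a - y a) * w a)
          - τ * (-(∑ a, x a * Real.log (x a)))
          + τ * (-(∑ a, y a * Real.log (y a)))) =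
      -(1 / (1 - η * τ)) * (∑ a, y a * (Real.log (y a) - Real.log (x a)))
        - (∑ a, x a * (Real.log (x a) - Real.log (y a)))) ∧
    (η / (1 - η * τ)) *
        ((∑ a, (x a - y a) * w a)
          - τ * (-(∑ a, x a * Real.log (x a)))
          + τ * (-(∑ a, y a * Real.log (y a)))) ≤ 0 := by
  have hL : 0 < 1 - η * τ := by linarith
  have hA : Nonempty A := by
    by_contra h
    rw [not_nonempty_iff] at h
    rw [Finset.univ_eq_empty, Finset.sum_empty] at hys
    norm_num at hys
  have hterm : ∀ a, 0 < y a ^ (1 - η * τ) * Real.exp (-η * w a) := fun a =>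
    mul_pos (Real.rpow_pos_of_pos (hy a) _) (Real.exp_pos _)
  have hZ : 0 < ∑ a', y a' ^ (1 - η * τ) * Real.exp (-η * w a') :=
    Finset.sum_pos (fun a _ => hterm a) Finset.univ_nonempty
  set Z := ∑ a', y a' ^ (1 - η * τ) * Real.exp (-η * w a') with hZdef
  have hxpos : ∀ a, 0 < x a := fun a => by rw [hx a]; exact div_pos (hterm a) hZ
  have hxs : ∑ a, x a = 1 := by
    simp only [hx]
    rw [← Finset.sum_div, div_self (ne_of_gt hZ)]
  have hw : ∀ a, η * w a = (1 - η * τ) * Real.log (y a) - Real.log (x a) - Real.log Z := by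
    intro a
    rw [hx a, Real.log_div (ne_of_gt (hterm a)) (ne_of_gt hZ),
      Real.log_mul (ne_of_gt (Real.rpow_pos_of_pos (hy a) _)) (Real.exp_ne_zero _),
      Real.log_rpow (hy a), Real.log_exp]
    ring
  have key : η * (∑ a, (x a - y a) * w a) =
      (1 - η * τ) * (∑ a, x a * Real.log (y a))
        - (1 - η * τ) * (∑ a, y a * Real.log (y a))
        - (∑ a, x a * Real.log (x a)) + (∑ a, y a * Real.log (x a))
        - Real.log Z * ((∑ a, x a) - (∑ a, y a)) := by
    calc η * (∑ a, (x a - y a) * w a)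
        = ∑ a, ((1 - η * τ) * (x a * Real.log (y a))
            - (1 - η * τ) * (y a * Real.log (y a))
            - x a * Real.log (x a) + y a * Real.log (x a)
            - Real.log Z * (x a - y a)) := by
          rw [Finset.mul_sum]
          exact Finset.sum_congr rfl fun a _ => by linear_combination (x a - y a) * hw a
      _ = _ := by
          rw [Finset.sum_sub_distrib, Finset.sum_add_distrib, Finset.sum_sub_distrib,
            Finset.sum_sub_distrib, ← Finset.mul_sum, ← Finset.mul_sum, ← Finset.mul_sum,
            Finset.sum_sub_distrib]
  rw [hxs, hys, sub_self, mul_zero, sub_zero] at key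
  have e1 : ∑ a, y a * (Real.log (y a) - Real.log (x a)) =
      (∑ a, y a * Real.log (y a)) - (∑ a, y a * Real.log (x a)) := by
    rw [← Finset.sum_sub_distrib]; exact Finset.sum_congr rfl fun a _ => by ring
  have e2 : ∑ a, x a * (Real.log (x a) - Real.log (y a)) =
      (∑ a, x a * Real.log (x a)) - (∑ a, x a * Real.log (y a)) := by
    rw [← Finset.sum_sub_distrib]; exact Finset.sum_congr rfl fun a _ => by ring
  have hmain : (η / (1 - η * τ)) *
        ((∑ a, (x a - y a) * w a)
          - τ * (-(∑ a, x a * Real.log (x a)))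
          + τ * (-(∑ a, y a * Real.log (y a)))) =
      -(1 / (1 - η * τ)) * (∑ a, y a * (Real.log (y a) - Real.log (x a)))
        - (∑ a, x a * (Real.log (x a) - Real.log (y a))) := by
    rw [e1, e2]
    have hLne : (1 - η * τ) ≠ 0 := ne_of_gt hL
    field_simp
    linear_combination key
  refine ⟨hmain, ?_⟩
  rw [hmain]
  have k1 : 0 ≤ ∑ a, y a * (Real.log (y a) - Real.log (x a)) :=
    kl_nonneg' y x hy hxpos hys hxs
  have k2 : 0 ≤ ∑ a, x a * (Real.log (x a) - Real.log (y a)) :=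
    kl_nonneg' x y hxpos hy hxs hys
  have hpos : 0 < 1 / (1 - η * τ) := by positivity
  nlinarith
end

section
/- Performance difference for regularized Markov games: in the entropy-regularized discounted zero-sum Markov game, for any policy pair (μ,ν) and initial distribution ρ, V_τ^{μ,ν}(ρ) - V_τ^⋆(ρ) = (1/(1-γ))·E_{s' ~ d_ρ^{μ,ν}}[f_{s'}(Q_τ^⋆, μ, ν) - f_{s'}(Q_τ^⋆, μ_τ^⋆, ν_τ^⋆)], where f_s(Q,μ,ν) = μ(s)ᵀQ(s)ν(s) + τH(μ(s)) - τH(ν(s)) and d_ρ^{μ,ν}(s) = (1-γ)·E_{s₀~ρ}[Σ_{t≥0} γ^t P(s_t = s | s₀)] is the discounted state visitation distribution. -/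
/-- A policy for a player with state space `S` and action space `X`:
nonnegative and sums to one in every state. -/
def IsMGPolicy {S X : Type*} [Fintype X] (μ : S → X → ℝ) : Prop :=
  ∀ s, (∀ x, 0 ≤ μ s x) ∧ ∑ x, μ s x = 1

private lemma swap3 {A B S : Type*} [Fintype A] [Fintype B] [Fintype S]
    (F : A → B → S → ℝ) :
    ∑ a, ∑ b, ∑ s, F a b s = ∑ s, ∑ a, ∑ b, F a b s := by
  calc ∑ a, ∑ b, ∑ s, F a b s
      = ∑ a, ∑ s, ∑ b, F a b s := Finset.sum_congr rfl (fun a _ => Finset.sum_comm)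
    _ = ∑ s, ∑ a, ∑ b, F a b s := Finset.sum_comm

theorem stmt_17 {S A B : Type*} [Fintype S] [Fintype A] [Fintype B]
    (γ τ : ℝ) (hγ0 : 0 ≤ γ) (hγ1 : γ < 1) (hτ : 0 ≤ τ)
    (r : S → A → B → ℝ) (hr : ∀ s a b, 0 ≤ r s a b ∧ r s a b ≤ 1)
    (P : S → A → B → S → ℝ) (hP0 : ∀ s a b s', 0 ≤ P s a b s')
    (hP1 : ∀ s a b, ∑ s', P s a b s' = 1)
    -- the entropy-regularized value function, characterized by its
    -- Bellman equation (which determines it uniquely)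
    (W : (S → A → ℝ) → (S → B → ℝ) → S → ℝ)
    (hW : ∀ (μ : S → A → ℝ) (ν : S → B → ℝ), IsMGPolicy μ → IsMGPolicy ν →
      ∀ s, W μ ν s =
        (∑ a, ∑ b, μ s a * ν s b * (r s a b + γ * ∑ s', P s a b s' * W μ ν s'))
          + τ * (-(∑ a, μ s a * Real.log (μ s a)))
          - τ * (-(∑ b, ν s b * Real.log (ν s b))))
    -- the policy pair under consideration
    (μ : S → A → ℝ) (ν : S → B → ℝ) (hμ : IsMGPolicy μ) (hν : IsMGPolicy ν)
    -- initial state distribution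
    (ρ : S → ℝ) (hρ : (∀ s, 0 ≤ ρ s) ∧ ∑ s, ρ s = 1)
    -- discounted state visitation distribution of (μ, ν) started from ρ,
    -- characterized by its fixed-point equation
    (d : S → ℝ)
    (hd : ∀ s', d s' =
      (1 - γ) * ρ s' + γ * ∑ s, ∑ a, ∑ b, d s * μ s a * ν s b * P s a b s')
    -- the quantal response equilibrium and its value/Q functions
    (μo : S → A → ℝ) (νo : S → B → ℝ) (hμo : IsMGPolicy μo) (hνo : IsMGPolicy νo)
    (Vo : S → ℝ) (Qo : S → A → B → ℝ)
    (hQo : ∀ s a b, Qo s a b = r s a b + γ * ∑ s', P s a b s' * Vo s')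
    (hVo : ∀ s, Vo s =
      (∑ a, ∑ b, μo s a * νo s b * Qo s a b)
        + τ * (-(∑ a, μo s a * Real.log (μo s a)))
        - τ * (-(∑ b, νo s b * Real.log (νo s b))))
    -- (μo, νo) is an equilibrium: saddle-point property of the one-step games
    (hsaddle : ∀ (μ₁ : S → A → ℝ) (ν₁ : S → B → ℝ), IsMGPolicy μ₁ → IsMGPolicy ν₁ →
      ∀ s,
        (∑ a, ∑ b, μ₁ s a * νo s b * Qo s a b)
            + τ * (-(∑ a, μ₁ s a * Real.log (μ₁ s a)))
            - τ * (-(∑ b, νo s b * Real.log (νo s b))) ≤ Vo s ∧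
        Vo s ≤ (∑ a, ∑ b, μo s a * ν₁ s b * Qo s a b)
            + τ * (-(∑ a, μo s a * Real.log (μo s a)))
            - τ * (-(∑ b, ν₁ s b * Real.log (ν₁ s b)))) :
    (∑ s, ρ s * W μ ν s) - (∑ s, ρ s * Vo s) =
      (1 / (1 - γ)) * ∑ s, d s *
        (((∑ a, ∑ b, μ s a * ν s b * Qo s a b)
            + τ * (-(∑ a, μ s a * Real.log (μ s a)))
            - τ * (-(∑ b, ν s b * Real.log (ν s b))))
          - ((∑ a, ∑ b, μo s a * νo s b * Qo s a b)
            + τ * (-(∑ a, μo s a * Real.log (μo s a)))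
            - τ * (-(∑ b, νo s b * Real.log (νo s b))))) := by
  have hγne : (1 : ℝ) - γ ≠ 0 := by linarith
  set Δ : S → ℝ := fun s => W μ ν s - Vo s with hΔ
  set g : S → ℝ := fun s =>
    ((∑ a, ∑ b, μ s a * ν s b * Qo s a b)
        + τ * (-(∑ a, μ s a * Real.log (μ s a)))
        - τ * (-(∑ b, ν s b * Real.log (ν s b))))
      - ((∑ a, ∑ b, μo s a * νo s b * Qo s a b)
        + τ * (-(∑ a, μo s a * Real.log (μo s a)))
        - τ * (-(∑ b, νo s b * Real.log (νo s b)))) with hg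
  -- Step 1: one-step expansion of Δ
  have hstep : ∀ s, Δ s =
      g s + γ * ∑ s', (∑ a, ∑ b, μ s a * ν s b * P s a b s') * Δ s' := by
    intro s
    have key :
        (∑ a, ∑ b, μ s a * ν s b * (r s a b + γ * ∑ s', P s a b s' * W μ ν s'))
          - (∑ a, ∑ b, μ s a * ν s b * Qo s a b)
        = γ * ∑ s', (∑ a, ∑ b, μ s a * ν s b * P s a b s') * Δ s' := by
      have lhs_eq :
          (∑ a, ∑ b, μ s a * ν s b * (r s a b + γ * ∑ s', P s a b s' * W μ ν s'))
            - (∑ a, ∑ b, μ s a * ν s b * Qo s a b)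
          = ∑ a, ∑ b, ∑ s', γ * (μ s a * ν s b * P s a b s' * Δ s') := by
        rw [← Finset.sum_sub_distrib]
        refine Finset.sum_congr rfl fun a _ => ?_
        rw [← Finset.sum_sub_distrib]
        refine Finset.sum_congr rfl fun b _ => ?_
        rw [hQo]
        simp only [hΔ]
        rw [show μ s a * ν s b * (r s a b + γ * ∑ s', P s a b s' * W μ ν s')
            - μ s a * ν s b * (r s a b + γ * ∑ s', P s a b s' * Vo s')
            = μ s a * ν s b * γ * ((∑ s', P s a b s' * W μ ν s')
              - ∑ s', P s a b s' * Vo s') from by ring]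
        rw [← Finset.sum_sub_distrib, Finset.mul_sum]
        exact Finset.sum_congr rfl fun s' _ => by ring
      rw [lhs_eq, swap3, Finset.mul_sum]
      refine Finset.sum_congr rfl fun s' _ => ?_
      simp only [Finset.sum_mul, Finset.mul_sum]
    have h1 := hW μ ν hμ hν s
    have h2 := hVo s
    simp only [hΔ, hg]
    have : W μ ν s - Vo s
        = ((∑ a, ∑ b, μ s a * ν s b * (r s a b + γ * ∑ s', P s a b s' * W μ ν s'))
            - (∑ a, ∑ b, μ s a * ν s b * Qo s a b))
          + (((∑ a, ∑ b, μ s a * ν s b * Qo s a b)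
              + τ * (-(∑ a, μ s a * Real.log (μ s a)))
              - τ * (-(∑ b, ν s b * Real.log (ν s b))))
            - ((∑ a, ∑ b, μo s a * νo s b * Qo s a b)
              + τ * (-(∑ a, μo s a * Real.log (μo s a)))
              - τ * (-(∑ b, νo s b * Real.log (νo s b))))) := by
      rw [h1]; nth_rewrite 1 [h2]; ring
    rw [this, key]; ring
  -- Step 2: weighted sums
  have hDsum : ∑ s, d s * Δ s
      = ∑ s, d s * g s + γ * ∑ s, ∑ s', d s * (∑ a, ∑ b, μ s a * ν s b * P s a b s') * Δ s' := by
    rw [Finset.mul_sum, ← Finset.sum_add_distrib]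
    refine Finset.sum_congr rfl fun s _ => ?_
    rw [hstep s]
    simp only [Finset.mul_sum, mul_add]
    congr 1
    refine Finset.sum_congr rfl fun s' _ => ?_
    simp only [← Finset.mul_sum]
    ring
  have hdsum2 : ∑ s', d s' * Δ s'
      = (1 - γ) * ∑ s, ρ s * Δ s
        + γ * ∑ s', (∑ s, ∑ a, ∑ b, d s * μ s a * ν s b * P s a b s') * Δ s' := by
    rw [Finset.mul_sum, Finset.mul_sum, ← Finset.sum_add_distrib]
    refine Finset.sum_congr rfl fun s' _ => ?_
    rw [hd s']; ring
  -- the two γ-terms agree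
  have hswap : ∑ s, ∑ s', d s * (∑ a, ∑ b, μ s a * ν s b * P s a b s') * Δ s'
      = ∑ s', (∑ s, ∑ a, ∑ b, d s * μ s a * ν s b * P s a b s') * Δ s' := by
    rw [Finset.sum_comm]
    refine Finset.sum_congr rfl fun s' _ => ?_
    simp only [Finset.sum_mul, Finset.mul_sum]
    exact Finset.sum_congr rfl fun s _ => Finset.sum_congr rfl fun a _ =>
      Finset.sum_congr rfl fun b _ => by ring
  have hmain : (1 - γ) * ∑ s, ρ s * Δ s = ∑ s, d s * g s := by
    have := hDsum
    rw [hswap] at this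
    linarith [hdsum2, this]
  have hl : (∑ s, ρ s * W μ ν s) - (∑ s, ρ s * Vo s) = ∑ s, ρ s * Δ s := by
    rw [← Finset.sum_sub_distrib]
    refine Finset.sum_congr rfl fun s _ => ?_
    simp only [hΔ]; ring
  rw [hl]
  rw [show (∑ s, d s * (((∑ a, ∑ b, μ s a * ν s b * Qo s a b)
      + τ * (-(∑ a, μ s a * Real.log (μ s a)))
      - τ * (-(∑ b, ν s b * Real.log (ν s b))))
    - ((∑ a, ∑ b, μo s a * νo s b * Qo s a b)
      + τ * (-(∑ a, μo s a * Real.log (μo s a)))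
      - τ * (-(∑ b, νo s b * Real.log (νo s b)))))) = ∑ s, d s * g s from rfl]
  rw [← hmain]
  field_simp
end

section
/- Duality-gap decomposition via ℓ1 distance to equilibrium: in a discounted zero-sum Markov game with rewards in [0,1], for any policy pair (μ,ν), any Nash equilibrium (μ⋆,ν⋆), and any initial distribution ρ, the duality gap obeys max_{μ',ν'}[V^{μ',ν}(ρ) - V^{μ,ν'}(ρ)] ≤ (1/(1-γ)²)·Σ_{s∈S}(‖ν(s) - ν⋆(s)‖₁ + ‖μ(s) - μ⋆(s)‖₁). -/
section Aux

variable {S A B : Type*} [Fintype S] [Fintype A] [Fintype B] [Nonempty S]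

private lemma fact_sum {A B : Type*} [Fintype A] [Fintype B]
    (f : A → ℝ) (g : B → ℝ) (c : ℝ) :
    ∑ a, ∑ b, f a * g b * c = (∑ a, f a) * ((∑ b, g b) * c) := by
  simp_rw [mul_assoc, ← Finset.mul_sum, ← Finset.sum_mul]

private lemma val_bound
    (γ : ℝ) (hγ0 : 0 ≤ γ) (hγ1 : γ < 1)
    (r : S → A → B → ℝ) (hr : ∀ s a b, 0 ≤ r s a b ∧ r s a b ≤ 1)
    (P : S → A → B → S → ℝ) (hP0 : ∀ s a b s', 0 ≤ P s a b s')
    (hP1 : ∀ s a b, ∑ s', P s a b s' = 1)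
    (μ : S → A → ℝ) (ν : S → B → ℝ) (hμ : IsMGPolicy μ) (hν : IsMGPolicy ν)
    (W : S → ℝ)
    (hW : ∀ s, W s = ∑ a, ∑ b, μ s a * ν s b * (r s a b + γ * ∑ s', P s a b s' * W s')) :
    ∀ s, |W s| ≤ 1 / (1 - γ) := by
  have hγ' : (0:ℝ) < 1 - γ := by linarith
  set m := Finset.univ.sup' Finset.univ_nonempty (fun s => |W s|) with hm
  have hle : ∀ s, |W s| ≤ m := fun s =>
    Finset.le_sup' (fun s => |W s|) (Finset.mem_univ s)
  have key : m ≤ 1 + γ * m := by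
    obtain ⟨s₀, -, hs₀⟩ := Finset.exists_mem_eq_sup' Finset.univ_nonempty (fun s => |W s|)
    conv_lhs => rw [hm, hs₀]
    calc |W s₀| ≤ ∑ a, ∑ b, μ s₀ a * ν s₀ b * (1 + γ * m) := by
          rw [hW s₀]
          refine le_trans (Finset.abs_sum_le_sum_abs _ _) ?_
          refine Finset.sum_le_sum fun a _ => ?_
          refine le_trans (Finset.abs_sum_le_sum_abs _ _) ?_
          refine Finset.sum_le_sum fun b _ => ?_
          have h1 : |∑ s', P s₀ a b s' * W s'| ≤ m := by
            refine le_trans (Finset.abs_sum_le_sum_abs _ _) ?_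
            calc ∑ s', |P s₀ a b s' * W s'| ≤ ∑ s', P s₀ a b s' * m := by
                  refine Finset.sum_le_sum fun s' _ => ?_
                  rw [abs_mul, abs_of_nonneg (hP0 _ _ _ _)]
                  exact mul_le_mul_of_nonneg_left (hle s') (hP0 _ _ _ _)
              _ = m := by rw [← Finset.sum_mul, hP1, one_mul]
          have h2 : |r s₀ a b + γ * ∑ s', P s₀ a b s' * W s'| ≤ 1 + γ * m := by
            refine le_trans (abs_add_le _ _) ?_
            gcongr
            · exact abs_le.mpr ⟨by linarith [(hr s₀ a b).1], (hr s₀ a b).2⟩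
            · rw [abs_mul, abs_of_nonneg hγ0]
              exact mul_le_mul_of_nonneg_left h1 hγ0
          rw [abs_mul, abs_mul, abs_of_nonneg ((hμ s₀).1 a), abs_of_nonneg ((hν s₀).1 b)]
          exact mul_le_mul_of_nonneg_left h2 (mul_nonneg ((hμ s₀).1 a) ((hν s₀).1 b))
      _ = 1 + γ * m := by rw [fact_sum, (hμ s₀).2, (hν s₀).2, one_mul, one_mul]
  intro s
  refine le_trans (hle s) ?_
  rw [le_div_iff₀ hγ']
  nlinarith

private lemma diff_bound
    (γ : ℝ) (hγ0 : 0 ≤ γ) (hγ1 : γ < 1)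
    (r : S → A → B → ℝ) (hr : ∀ s a b, 0 ≤ r s a b ∧ r s a b ≤ 1)
    (P : S → A → B → S → ℝ) (hP0 : ∀ s a b s', 0 ≤ P s a b s')
    (hP1 : ∀ s a b, ∑ s', P s a b s' = 1)
    (μ : S → A → ℝ) (ν₁ ν₂ : S → B → ℝ)
    (hμ : IsMGPolicy μ) (hν₁ : IsMGPolicy ν₁) (hν₂ : IsMGPolicy ν₂)
    (W₁ W₂ : S → ℝ)
    (hW₁ : ∀ s, W₁ s = ∑ a, ∑ b, μ s a * ν₁ s b * (r s a b + γ * ∑ s', P s a b s' * W₁ s'))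
    (hW₂ : ∀ s, W₂ s = ∑ a, ∑ b, μ s a * ν₂ s b * (r s a b + γ * ∑ s', P s a b s' * W₂ s')) :
    ∀ s, W₁ s - W₂ s ≤ (1 / (1 - γ)^2) * ∑ s, ∑ b, |ν₁ s b - ν₂ s b| := by
  have hγ' : (0:ℝ) < 1 - γ := by linarith
  set L := ∑ s, ∑ b, |ν₁ s b - ν₂ s b| with hLdef
  have hL0 : 0 ≤ L :=
    Finset.sum_nonneg fun s _ => Finset.sum_nonneg fun b _ => abs_nonneg _
  have hLs : ∀ s, ∑ b, |ν₁ s b - ν₂ s b| ≤ L := fun s =>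
    Finset.single_le_sum (f := fun s => ∑ b, |ν₁ s b - ν₂ s b|)
      (fun i _ => Finset.sum_nonneg fun b _ => abs_nonneg _) (Finset.mem_univ s)
  have hB₁ := val_bound γ hγ0 hγ1 r hr P hP0 hP1 μ ν₁ hμ hν₁ W₁ hW₁
  set δ := Finset.univ.sup' Finset.univ_nonempty (fun s => W₁ s - W₂ s) with hδdef
  have hδle : ∀ s, W₁ s - W₂ s ≤ δ := fun s =>
    Finset.le_sup' (fun s => W₁ s - W₂ s) (Finset.mem_univ s)
  have key : ∀ s, W₁ s - W₂ s ≤ L / (1 - γ) + γ * δ := by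
    intro s
    rw [hW₁ s, hW₂ s, ← Finset.sum_sub_distrib]
    simp only [← Finset.sum_sub_distrib]
    calc ∑ a, ∑ b,
          (μ s a * ν₁ s b * (r s a b + γ * ∑ s', P s a b s' * W₁ s')
            - μ s a * ν₂ s b * (r s a b + γ * ∑ s', P s a b s' * W₂ s'))
        ≤ ∑ a, ∑ b, (μ s a * (|ν₁ s b - ν₂ s b| * (1 / (1 - γ)))
            + μ s a * (ν₂ s b * (γ * δ))) := by
          refine Finset.sum_le_sum fun a _ => Finset.sum_le_sum fun b _ => ?_
          set E₁ := r s a b + γ * ∑ s', P s a b s' * W₁ s' with hE₁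
          set E₂ := r s a b + γ * ∑ s', P s a b s' * W₂ s' with hE₂
          have heq : μ s a * ν₁ s b * E₁ - μ s a * ν₂ s b * E₂
              = μ s a * ((ν₁ s b - ν₂ s b) * E₁) + μ s a * (ν₂ s b * (E₁ - E₂)) := by ring
          rw [heq]
          have hμ0 := (hμ s).1 a
          have hν₂0 := (hν₂ s).1 b
          have hbd1 : (ν₁ s b - ν₂ s b) * E₁ ≤ |ν₁ s b - ν₂ s b| * (1 / (1 - γ)) := by
            have hE₁b : |E₁| ≤ 1 / (1 - γ) := by
              rw [hE₁]
              refine le_trans (abs_add_le _ _) ?_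
              have h1 : |∑ s', P s a b s' * W₁ s'| ≤ 1 / (1 - γ) := by
                refine le_trans (Finset.abs_sum_le_sum_abs _ _) ?_
                calc ∑ s', |P s a b s' * W₁ s'| ≤ ∑ s', P s a b s' * (1 / (1 - γ)) := by
                      refine Finset.sum_le_sum fun s' _ => ?_
                      rw [abs_mul, abs_of_nonneg (hP0 _ _ _ _)]
                      exact mul_le_mul_of_nonneg_left (hB₁ s') (hP0 _ _ _ _)
                  _ = 1 / (1 - γ) := by rw [← Finset.sum_mul, hP1, one_mul]
              have h2 : |r s a b| ≤ 1 :=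
                abs_le.mpr ⟨by linarith [(hr s a b).1], (hr s a b).2⟩
              have h3 : |γ * ∑ s', P s a b s' * W₁ s'| ≤ γ * (1 / (1 - γ)) := by
                rw [abs_mul, abs_of_nonneg hγ0]
                exact mul_le_mul_of_nonneg_left h1 hγ0
              have : 1 + γ * (1 / (1 - γ)) = 1 / (1 - γ) := by field_simp; ring
              linarith
            calc (ν₁ s b - ν₂ s b) * E₁ ≤ |(ν₁ s b - ν₂ s b) * E₁| := le_abs_self _
              _ = |ν₁ s b - ν₂ s b| * |E₁| := abs_mul _ _
              _ ≤ |ν₁ s b - ν₂ s b| * (1 / (1 - γ)) :=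
                  mul_le_mul_of_nonneg_left hE₁b (abs_nonneg _)
          have hbd2 : E₁ - E₂ ≤ γ * δ := by
            have : E₁ - E₂ = γ * ∑ s', P s a b s' * (W₁ s' - W₂ s') := by
              rw [hE₁, hE₂]
              have h4 : ∑ s', P s a b s' * (W₁ s' - W₂ s')
                  = (∑ s', P s a b s' * W₁ s') - ∑ s', P s a b s' * W₂ s' := by
                rw [← Finset.sum_sub_distrib]
                exact Finset.sum_congr rfl fun s' _ => by ring
              rw [h4]; ring
            rw [this]
            refine mul_le_mul_of_nonneg_left ?_ hγ0
            calc ∑ s', P s a b s' * (W₁ s' - W₂ s') ≤ ∑ s', P s a b s' * δ :=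
                Finset.sum_le_sum fun s' _ =>
                  mul_le_mul_of_nonneg_left (hδle s') (hP0 _ _ _ _)
              _ = δ := by rw [← Finset.sum_mul, hP1, one_mul]
          exact add_le_add (mul_le_mul_of_nonneg_left hbd1 hμ0)
            (mul_le_mul_of_nonneg_left (mul_le_mul_of_nonneg_left hbd2 hν₂0) hμ0)
      _ = (∑ b, |ν₁ s b - ν₂ s b|) * (1 / (1 - γ)) + γ * δ := by
          simp only [Finset.sum_add_distrib]
          simp_rw [← Finset.mul_sum, ← Finset.sum_mul, (hμ s).2, (hν₂ s).2, one_mul]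
      _ ≤ L / (1 - γ) + γ * δ := by
          have h5 : (∑ b, |ν₁ s b - ν₂ s b|) * (1 / (1 - γ)) ≤ L * (1 / (1 - γ)) :=
            mul_le_mul_of_nonneg_right (hLs s) (by positivity)
          have h6 : L * (1 / (1 - γ)) = L / (1 - γ) := by ring
          linarith
  have hδb : δ ≤ L / (1 - γ) + γ * δ := by
    obtain ⟨s₀, -, hs₀⟩ := Finset.exists_mem_eq_sup' Finset.univ_nonempty (fun s => W₁ s - W₂ s)
    conv_lhs => rw [hδdef, hs₀]
    exact key s₀
  have hfinal : δ ≤ (1 / (1 - γ)^2) * L := by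
    have h1 : δ * ((1 - γ) * (1 - γ)) ≤ L := by
      have h2 : δ * (1 - γ) ≤ L / (1 - γ) := by nlinarith
      have h3 := mul_le_mul_of_nonneg_right h2 hγ'.le
      rw [div_mul_cancel₀ _ (ne_of_gt hγ')] at h3
      nlinarith
    have h4 : (0:ℝ) < (1 - γ)^2 := by positivity
    rw [one_div, inv_mul_eq_div, le_div_iff₀ h4, pow_two]
    exact h1
  intro s
  exact le_trans (hδle s) hfinal

end Aux

theorem stmt_19 {S A B : Type*} [Fintype S] [Fintype A] [Fintype B]
    (γ : ℝ) (hγ0 : 0 ≤ γ) (hγ1 : γ < 1)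
    (r : S → A → B → ℝ) (hr : ∀ s a b, 0 ≤ r s a b ∧ r s a b ≤ 1)
    (P : S → A → B → S → ℝ) (hP0 : ∀ s a b s', 0 ≤ P s a b s')
    (hP1 : ∀ s a b, ∑ s', P s a b s' = 1)
    -- the (unregularized) value function, characterized by its Bellman
    -- equation (which determines it uniquely)
    (V : (S → A → ℝ) → (S → B → ℝ) → S → ℝ)
    (hV : ∀ (μ : S → A → ℝ) (ν : S → B → ℝ), IsMGPolicy μ → IsMGPolicy ν →
      ∀ s, V μ ν s =
        ∑ a, ∑ b, μ s a * ν s b * (r s a b + γ * ∑ s', P s a b s' * V μ ν s'))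
    -- a Nash equilibrium (μo, νo) with optimal value Vo
    (μo : S → A → ℝ) (νo : S → B → ℝ) (hμo : IsMGPolicy μo) (hνo : IsMGPolicy νo)
    (Vo : S → ℝ) (hVo : ∀ s, V μo νo s = Vo s)
    (hNE : ∀ (μ₁ : S → A → ℝ) (ν₁ : S → B → ℝ), IsMGPolicy μ₁ → IsMGPolicy ν₁ →
      ∀ s, V μ₁ νo s ≤ Vo s ∧ Vo s ≤ V μo ν₁ s)
    -- initial state distribution
    (ρ : S → ℝ) (hρ : (∀ s, 0 ≤ ρ s) ∧ ∑ s, ρ s = 1)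
    -- the policy pair under consideration
    (μ : S → A → ℝ) (ν : S → B → ℝ) (hμ : IsMGPolicy μ) (hν : IsMGPolicy ν) :
    ∀ (μ' : S → A → ℝ) (ν' : S → B → ℝ), IsMGPolicy μ' → IsMGPolicy ν' →
      (∑ s, ρ s * V μ' ν s) - (∑ s, ρ s * V μ ν' s) ≤
        (1 / (1 - γ)^2) *
          ∑ s, ((∑ b, |ν s b - νo s b|) + (∑ a, |μ s a - μo s a|)) := by
  intro μ' ν' hμ' hν'
  rcases isEmpty_or_nonempty S with hS | hS
  · simp
  · have hγ' : (0:ℝ) < 1 - γ := by linarith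
    set c : ℝ := 1 / (1 - γ)^2 with hc
    set Lν : ℝ := ∑ s, ∑ b, |ν s b - νo s b| with hLν
    set Lμ : ℝ := ∑ s, ∑ a, |μ s a - μo s a| with hLμ
    -- bound for the ν-side
    have hbν : ∀ s, V μ' ν s - V μ' νo s ≤ c * Lν :=
      diff_bound γ hγ0 hγ1 r hr P hP0 hP1 μ' ν νo hμ' hν hνo
        (V μ' ν) (V μ' νo) (hV μ' ν hμ' hν) (hV μ' νo hμ' hνo)
    -- bound for the μ-side, via the swapped game
    have conv : ∀ (μ₁ : S → A → ℝ), IsMGPolicy μ₁ →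
        ∀ s, V μ₁ ν' s = ∑ b, ∑ a, ν' s b * μ₁ s a *
          ((fun s b a => r s a b) s b a
            + γ * ∑ s', (fun s b a => P s a b) s b a s' * V μ₁ ν' s') := by
      intro μ₁ hμ₁ s
      rw [hV μ₁ ν' hμ₁ hν' s, Finset.sum_comm]
      exact Finset.sum_congr rfl fun b _ => Finset.sum_congr rfl fun a _ => by ring
    have hbμ : ∀ s, V μo ν' s - V μ ν' s ≤ c * ∑ s, ∑ a, |μo s a - μ s a| :=
      diff_bound γ hγ0 hγ1 (fun s b a => r s a b) (fun s b a => hr s a b)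
        (fun s b a => P s a b) (fun s b a s' => hP0 s a b s')
        (fun s b a => hP1 s a b) ν' μo μ hν' hμo hμ
        (V μo ν') (V μ ν') (conv μo hμo) (conv μ hμ)
    have habs : (∑ s, ∑ a, |μo s a - μ s a|) = Lμ := by
      rw [hLμ]
      exact Finset.sum_congr rfl fun s _ => Finset.sum_congr rfl fun a _ => abs_sub_comm _ _
    have h1 : ∀ s, V μ' ν s - Vo s ≤ c * Lν := fun s => by
      have := (hNE μ' ν' hμ' hν' s).1
      linarith [hbν s]
    have h2 : ∀ s, Vo s - V μ ν' s ≤ c * Lμ := fun s => by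
      have := (hNE μ ν' hμ hν' s).2
      have hb := hbμ s
      rw [habs] at hb
      linarith
    calc (∑ s, ρ s * V μ' ν s) - (∑ s, ρ s * V μ ν' s)
        = ∑ s, ρ s * (V μ' ν s - V μ ν' s) := by
          rw [← Finset.sum_sub_distrib]
          exact Finset.sum_congr rfl fun s _ => by ring
      _ ≤ ∑ s, ρ s * (c * Lν + c * Lμ) :=
          Finset.sum_le_sum fun s _ =>
            mul_le_mul_of_nonneg_left (by linarith [h1 s, h2 s]) (hρ.1 s)
      _ = c * Lν + c * Lμ := by rw [← Finset.sum_mul, hρ.2, one_mul]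
      _ = c * ∑ s, ((∑ b, |ν s b - νo s b|) + (∑ a, |μ s a - μo s a|)) := by
          rw [Finset.sum_add_distrib, ← hLν, ← hLμ]; ring
end
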